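/- The function s : ℝ → [-∞, 0], s(x) = sup_{n≥1} (1/n) log ℙ(X̄ₙ ≥ x), is concave: for all x, y ∈ ℝ and α ∈ [0,1], s(αx + (1-α)y) ≥ αs(x) + (1-α)s(y) (with the convention that the right side is -∞ if either term is -∞). -/

import Mathlib

open MeasureTheory ProbabilityTheory Filter Topology

/-- Empirical mean of the first `n` variables. -/
noncomputable def empMean {Ω : Type*} (X : ℕ → Ω → ℝ) (n : ℕ) (ω : Ω) : ℝ :=
  (∑ i ∈ Finset.range n, X i ω) / n

/-- The entropy `s(x) = sup_{n ≥ 1} (1/n) log ℙ(X̄ₙ ≥ x)`, with values in `[-∞, 0]`. -/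
noncomputable def entropy {Ω : Type*} [MeasurableSpace Ω] (μ : Measure Ω)
    (X : ℕ → Ω → ℝ) (x : ℝ) : EReal :=
  ⨆ n : ℕ, ⨆ _ : 1 ≤ n, (((n : ℝ)⁻¹ : ℝ) : EReal) *
    ENNReal.log (μ {ω | x ≤ empMean X n ω})

/-- The pressure `p(λ) = log 𝔼(e^{λ X₁})`, with values in `(-∞, ∞]`. -/
noncomputable def pressure {Ω : Type*} [MeasurableSpace Ω] (μ : Measure Ω)
    (X : ℕ → Ω → ℝ) (l : ℝ) : EReal :=
  ENNReal.log (∫⁻ ω, ENNReal.ofReal (Real.exp (l * X 0 ω)) ∂μ)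

/-!
Write `q n c = μ {c ≤ X₀ + ⋯ + Xₙ₋₁}`. Splitting `n + m` variables into two independent blocks,
the second distributed like the first `m`, makes `q` supermultiplicative:
`q n c * q m d ≤ q (n + m) (c + d)`. Hence the roots `q n (n x) ^ (1 / n)` increase along multiples
of `n`, and `T x = ⨆ n, q n (n x) ^ (1 / n) = exp (s x)` satisfies
`T x ^ w * T y ^ (1 - w) ≤ T (w x + (1 - w) y)` for rational `w = n / (n + m)`, by comparing the
terms of index `n₀` and `m₀` with those of index `n m₀ n₀` and `m n₀ m₀`.
Since `T` is antitone, approximating a real `α` by such `w` from the side on which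
`α x + (1 - α) y ≤ w x + (1 - w) y` gives the inequality for every `α`.
-/

open Set
open scoped ENNReal

theorem exists_nat_div_add_mem_Ioo {α β : ℝ} (hα : 0 ≤ α) (hαβ : α < β) (hβ : β ≤ 1) :
    ∃ n m : ℕ, 1 ≤ n ∧ 1 ≤ m ∧ (n : ℝ) / (n + m) ∈ Ioo α β := by
  have hβα : 0 < β - α := sub_pos.2 hαβ
  obtain ⟨d, hd⟩ := exists_nat_gt (1 / (β - α))
  have hd0 : (0 : ℝ) < d := (by positivity : (0 : ℝ) < 1 / (β - α)).trans hd
  have hgap : 1 < (β - α) * d := by rwa [div_lt_iff₀ hβα, mul_comm] at hd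
  set n := ⌊α * d⌋₊ + 1
  have hn_gt : α * d < n := by push_cast [n]; exact Nat.lt_floor_add_one _
  have hn_le : (n : ℝ) ≤ α * d + 1 := by
    push_cast [n]; linarith [Nat.floor_le (by positivity : 0 ≤ α * d)]
  have hnd : n < d := by exact_mod_cast (show (n : ℝ) < d by nlinarith)
  refine ⟨n, d - n, by omega, by omega, ?_⟩
  rw [Nat.cast_sub hnd.le, add_sub_cancel, mem_Ioo, lt_div_iff₀ hd0, div_lt_iff₀ hd0]
  constructor <;> linarith

theorem EReal.coe_mul_add_coe_mul_le_of_forall_exists {a b c : EReal} {α : ℝ} (hα : α ∈ Ioo 0 1)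
    (hab : a ≤ b) (hb : b ≠ ⊤)
    (h : ∀ β, α < β → β ≤ 1 → ∃ w ∈ Ioo α β, (w : EReal) * a + ((1 - w : ℝ) : EReal) * b ≤ c) :
    (α : EReal) * a + ((1 - α : ℝ) : EReal) * b ≤ c := by
  rcases eq_or_ne a ⊥ with rfl | ha
  · simp [EReal.coe_mul_bot_of_pos hα.1]
  have ha' : ⊥ < a := bot_lt_iff_ne_bot.2 ha
  obtain ⟨A, rfl⟩ : ∃ A : ℝ, (A : EReal) = a :=
    ⟨a.toReal, EReal.coe_toReal (hab.trans_lt (lt_top_iff_ne_top.2 hb)).ne ha⟩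
  obtain ⟨B, rfl⟩ : ∃ B : ℝ, (B : EReal) = b :=
    ⟨b.toReal, EReal.coe_toReal hb (ha'.trans_le hab).ne'⟩
  have hAB : A ≤ B := EReal.coe_le_coe_iff.1 hab
  have hBA : 0 < B - A + 1 := by linarith
  norm_cast
  refine EReal.le_of_forall_lt_iff_le.1 fun z hz => EReal.coe_le_coe_iff.2 ?_
  refine le_of_forall_pos_lt_add fun ε hε => ?_
  have hδ : 0 < ε / (B - A + 1) := by positivity
  obtain ⟨w, ⟨hαw, hwβ⟩, hw⟩ := h (min (α + ε / (B - A + 1)) 1)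
    (lt_min (by linarith) hα.2) (min_le_right _ _)
  have hwz : w * A + (1 - w) * B < z := by exact_mod_cast hw.trans_lt hz
  -- the slope of `w ↦ w * A + (1 - w) * B` is `A - B ∈ (-(B - A + 1), 0]`
  have hslope : (w - α) * (B - A + 1) < ε := by
    rw [← lt_div_iff₀ hBA]; linarith [min_le_left (α + ε / (B - A + 1)) 1]
  nlinarith

theorem ENNReal.iSup_rpow_mul_iSup_rpow_le {ι κ : Sort*} {f : ι → ℝ≥0∞} {g : κ → ℝ≥0∞} {a b : ℝ}
    (ha : 0 < a) (hb : 0 < b) {c : ℝ≥0∞} (h : ∀ i j, f i ^ a * g j ^ b ≤ c) :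
    (⨆ i, f i) ^ a * (⨆ j, g j) ^ b ≤ c := by
  rw [← ENNReal.orderIsoRpow_apply a ha, ← ENNReal.orderIsoRpow_apply b hb,
    OrderIso.map_iSup, OrderIso.map_iSup, ENNReal.iSup_mul]
  exact iSup_le fun i => by
    rw [ENNReal.mul_iSup]
    exact iSup_le fun j => h i j

namespace ProbabilityTheory

variable {Ω ι β : Type*} [MeasurableSpace Ω] {μ : Measure Ω} [MeasurableSpace β]

theorem iIndepFun.indepFun_sum_of_disjoint [AddCommMonoid β] [MeasurableAdd₂ β]
    {X : ι → Ω → β} (hX : iIndepFun X μ) (hmeas : ∀ i, AEMeasurable (X i) μ)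
    {S T : Finset ι} (hST : Disjoint S T) :
    IndepFun (fun ω => ∑ i ∈ S, X i ω) (fun ω => ∑ i ∈ T, X i ω) μ := by
  have := (hX.indepFun_finset₀ S T hST hmeas).comp (φ := fun v : S → β => ∑ i, v i)
    (ψ := fun v : T → β => ∑ i, v i) (by fun_prop) (by fun_prop)
  convert this using 1 <;> funext ω <;> exact (Finset.sum_coe_sort _ fun i => X i ω).symm

theorem iIndepFun.identDistrib_pi_of_injective {κ : Type*} [Fintype κ]
    {X : ι → Ω → β} (hX : iIndepFun X μ) (hident : ∀ i j, IdentDistrib (X i) (X j) μ μ)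
    {g h : κ → ι} (hg : g.Injective) (hh : h.Injective) :
    IdentDistrib (fun ω k => X (g k) ω) (fun ω k => X (h k) ω) μ μ where
  aemeasurable_fst := aemeasurable_pi_lambda _ fun k => (hident (g k) (h k)).aemeasurable_fst
  aemeasurable_snd := aemeasurable_pi_lambda _ fun k => (hident (g k) (h k)).aemeasurable_snd
  map_eq := by
    rw [(hX.precomp hg).map_fun_eq_pi_map fun k => (hident (g k) (h k)).aemeasurable_fst,
      (hX.precomp hh).map_fun_eq_pi_map fun k => (hident (g k) (h k)).aemeasurable_snd]
    exact congrArg Measure.pi (funext fun k => (hident (g k) (h k)).map_eq)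

theorem iIndepFun.identDistrib_sum_range_add [AddCommMonoid β] [MeasurableAdd₂ β]
    {X : ℕ → Ω → β} (hX : iIndepFun X μ) (hident : ∀ i j, IdentDistrib (X i) (X j) μ μ)
    (n m : ℕ) :
    IdentDistrib (fun ω => ∑ i ∈ Finset.range m, X (n + i) ω)
      (fun ω => ∑ i ∈ Finset.range m, X i ω) μ μ := by
  have := (hX.identDistrib_pi_of_injective hident (g := fun k : Fin m => n + k)
    (h := fun k : Fin m => k) (fun a b hab => Fin.ext (by simpa using hab)) Fin.val_injective).comp
    (u := fun v : Fin m → β => ∑ k, v k) (by fun_prop)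
  convert this using 1 <;> funext ω
  exacts [(Fin.sum_univ_eq_sum_range (fun k => X (n + k) ω) m).symm,
    (Fin.sum_univ_eq_sum_range (fun k => X k ω) m).symm]

theorem iIndepFun.measure_le_sum_range_mul_le {X : ℕ → Ω → ℝ}
    (hX : iIndepFun X μ) (hident : ∀ i j, IdentDistrib (X i) (X j) μ μ) (n m : ℕ) (c d : ℝ) :
    μ {ω | c ≤ ∑ i ∈ Finset.range n, X i ω} * μ {ω | d ≤ ∑ i ∈ Finset.range m, X i ω} ≤
      μ {ω | c + d ≤ ∑ i ∈ Finset.range (n + m), X i ω} := by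
  have hblocks : IndepFun (fun ω => ∑ i ∈ Finset.range n, X i ω)
      (fun ω => ∑ i ∈ Finset.range m, X (n + i) ω) μ := by
    have := hX.indepFun_sum_of_disjoint (fun i => (hident i i).aemeasurable_fst)
      (Finset.range_eq_Ico n ▸ Finset.Ico_disjoint_Ico_consecutive 0 n (n + m))
    simpa only [Finset.sum_Ico_eq_sum_range, add_tsub_cancel_left] using this
  calc μ {ω | c ≤ ∑ i ∈ Finset.range n, X i ω} * μ {ω | d ≤ ∑ i ∈ Finset.range m, X i ω}
      = μ ((fun ω => ∑ i ∈ Finset.range n, X i ω) ⁻¹' Ici c ∩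
          (fun ω => ∑ i ∈ Finset.range m, X (n + i) ω) ⁻¹' Ici d) := by
        rw [hblocks.measure_inter_preimage_eq_mul _ _ measurableSet_Ici measurableSet_Ici,
          (hX.identDistrib_sum_range_add hident n m).measure_mem_eq measurableSet_Ici]
        rfl
    _ ≤ μ {ω | c + d ≤ ∑ i ∈ Finset.range (n + m), X i ω} :=
        measure_mono fun ω ⟨(hc : c ≤ _), (hd : d ≤ _)⟩ =>
          show c + d ≤ _ by rw [Finset.sum_range_add]; exact add_le_add hc hd

end ProbabilityTheory

namespace SupermultiplicativeTail

variable {q : ℕ → ℝ → ℝ≥0∞}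

noncomputable def tailRoot (q : ℕ → ℝ → ℝ≥0∞) (n : ℕ) (x : ℝ) : ℝ≥0∞ :=
  q n (n * x) ^ ((n : ℝ)⁻¹)

noncomputable def tailRootSup (q : ℕ → ℝ → ℝ≥0∞) (x : ℝ) : ℝ≥0∞ :=
  ⨆ n : ℕ, ⨆ _ : 1 ≤ n, tailRoot q n x

theorem pow_le_mul (hq : ∀ n m c d, q n c * q m d ≤ q (n + m) (c + d)) (n : ℕ) (c : ℝ)
    {j : ℕ} (hj : 1 ≤ j) : q n c ^ j ≤ q (j * n) (j * c) := by
  induction j, hj using Nat.le_induction with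
  | base => simp
  | succ j _ ih =>
    calc q n c ^ (j + 1) = q n c ^ j * q n c := pow_succ _ _
      _ ≤ q (j * n) (j * c) * q n c := by gcongr
      _ ≤ q ((j + 1) * n) ((j + 1 : ℕ) * c) := by
        convert hq (j * n) n (j * c) c using 2 <;> push_cast <;> ring

theorem tailRoot_le_tailRoot_mul (hq : ∀ n m c d, q n c * q m d ≤ q (n + m) (c + d))
    {n j : ℕ} (hj : 1 ≤ j) (x : ℝ) : tailRoot q n x ≤ tailRoot q (j * n) x := by
  have hj' : (j : ℝ) ≠ 0 := by positivity
  calc tailRoot q n x = (q n (n * x) ^ j) ^ ((j * n : ℕ) : ℝ)⁻¹ := by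
        rw [tailRoot, ← ENNReal.rpow_natCast, ← ENNReal.rpow_mul]
        congr 1
        push_cast
        field_simp
    _ ≤ q (j * n) (j * (n * x)) ^ ((j * n : ℕ) : ℝ)⁻¹ := by
        gcongr
        exact pow_le_mul hq n _ hj
    _ = tailRoot q (j * n) x := by
        rw [tailRoot]
        push_cast
        ring_nf

theorem tailRoot_rpow_mul_tailRoot_rpow_le (hq : ∀ n m c d, q n c * q m d ≤ q (n + m) (c + d))
    {n m : ℕ} (hn : 1 ≤ n) (hm : 1 ≤ m) (x y : ℝ) :
    tailRoot q n x ^ ((n : ℝ) / (n + m)) * tailRoot q m y ^ ((m : ℝ) / (n + m)) ≤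
      tailRoot q (n + m) ((n * x + m * y) / (n + m)) := by
  have hn' : (n : ℝ) ≠ 0 := by positivity
  have hm' : (m : ℝ) ≠ 0 := by positivity
  have hnm : (n : ℝ) + m ≠ 0 := by positivity
  calc tailRoot q n x ^ ((n : ℝ) / (n + m)) * tailRoot q m y ^ ((m : ℝ) / (n + m))
      = (q n (n * x) * q m (m * y)) ^ ((n : ℝ) + m)⁻¹ := by
        rw [tailRoot, tailRoot, ← ENNReal.rpow_mul, ← ENNReal.rpow_mul,
          ENNReal.mul_rpow_of_nonneg _ _ (by positivity)]
        congr 2 <;> field_simp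
    _ ≤ q (n + m) (n * x + m * y) ^ ((n : ℝ) + m)⁻¹ := by
        gcongr
        exact hq _ _ _ _
    _ = tailRoot q (n + m) ((n * x + m * y) / (n + m)) := by
        rw [tailRoot]
        push_cast
        field_simp

theorem tailRootSup_rpow_mul_tailRootSup_rpow_le
    (hq : ∀ n m c d, q n c * q m d ≤ q (n + m) (c + d))
    {n m : ℕ} (hn : 1 ≤ n) (hm : 1 ≤ m) (x y : ℝ) :
    tailRootSup q x ^ ((n : ℝ) / (n + m)) * tailRootSup q y ^ ((m : ℝ) / (n + m)) ≤
      tailRootSup q ((n * x + m * y) / (n + m)) := by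
  refine ENNReal.iSup_rpow_mul_iSup_rpow_le (by positivity) (by positivity) fun n₀ m₀ =>
    ENNReal.iSup_rpow_mul_iSup_rpow_le (by positivity) (by positivity) fun hn₀ hm₀ => ?_
  -- Pass to the common multiples `n * m₀ * n₀` and `m * n₀ * m₀`, which are in the ratio `n : m`.
  have hn₁ : 1 ≤ n * m₀ * n₀ := Nat.one_le_iff_ne_zero.2 (by positivity)
  have hm₁ : 1 ≤ m * n₀ * m₀ := Nat.one_le_iff_ne_zero.2 (by positivity)
  have hn₀' : (n₀ : ℝ) ≠ 0 := by positivity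
  have hm₀' : (m₀ : ℝ) ≠ 0 := by positivity
  have hnm : (n : ℝ) + m ≠ 0 := by positivity
  have hw : ((n * m₀ * n₀ : ℕ) : ℝ) / ((n * m₀ * n₀ : ℕ) + (m * n₀ * m₀ : ℕ)) = n / (n + m) := by
    push_cast; field_simp
  have hw' : ((m * n₀ * m₀ : ℕ) : ℝ) / ((n * m₀ * n₀ : ℕ) + (m * n₀ * m₀ : ℕ)) = m / (n + m) := by
    push_cast; field_simp
  have hz : ((n * m₀ * n₀ : ℕ) * x + (m * n₀ * m₀ : ℕ) * y) /
      ((n * m₀ * n₀ : ℕ) + (m * n₀ * m₀ : ℕ) : ℝ) = (n * x + m * y) / (n + m) := by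
    push_cast; field_simp
  calc tailRoot q n₀ x ^ ((n : ℝ) / (n + m)) * tailRoot q m₀ y ^ ((m : ℝ) / (n + m))
      ≤ tailRoot q (n * m₀ * n₀) x ^ ((n : ℝ) / (n + m)) *
          tailRoot q (m * n₀ * m₀) y ^ ((m : ℝ) / (n + m)) := by
        gcongr
        · exact tailRoot_le_tailRoot_mul hq (Nat.one_le_iff_ne_zero.2 (by positivity)) x
        · exact tailRoot_le_tailRoot_mul hq (Nat.one_le_iff_ne_zero.2 (by positivity)) y
    _ ≤ tailRoot q (n * m₀ * n₀ + m * n₀ * m₀) ((n * x + m * y) / (n + m)) := by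
        rw [← hw, ← hw', ← hz]
        exact tailRoot_rpow_mul_tailRoot_rpow_le hq hn₁ hm₁ x y
    _ ≤ tailRootSup q ((n * x + m * y) / (n + m)) :=
        le_iSup₂ (f := fun k (_ : 1 ≤ k) => tailRoot q k _) _ (by omega)

theorem tailRootSup_antitone (hanti : ∀ n, Antitone (q n)) : Antitone (tailRootSup q) :=
  fun x x' hx => iSup₂_mono fun n _ => by
    unfold tailRoot
    gcongr
    exact hanti n (by gcongr)

theorem tailRootSup_le_one (hq1 : ∀ n c, q n c ≤ 1) (x : ℝ) : tailRootSup q x ≤ 1 :=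
  iSup₂_le fun n _ => ENNReal.rpow_le_one (hq1 n _) (by positivity)

theorem log_tailRootSup_concave (hanti : ∀ n, Antitone (q n))
    (hq : ∀ n m c d, q n c * q m d ≤ q (n + m) (c + d)) (hq1 : ∀ n c, q n c ≤ 1)
    (x y α : ℝ) (hα : α ∈ Icc (0 : ℝ) 1) :
    (α : EReal) * ENNReal.log (tailRootSup q x) +
        ((1 - α : ℝ) : EReal) * ENNReal.log (tailRootSup q y) ≤
      ENNReal.log (tailRootSup q (α * x + (1 - α) * y)) := by
  wlog hxy : y ≤ x generalizing x y α
  · have := this y x (1 - α) ⟨by linarith [hα.2], by linarith [hα.1]⟩ (le_of_not_ge hxy)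
    rwa [sub_sub_cancel, add_comm, add_comm ((1 - α) * y)] at this
  obtain rfl | hα0 := hα.1.eq_or_lt
  · simp
  obtain rfl | hα1 := hα.2.eq_or_lt
  · simp
  have hlog_anti : Antitone fun x => ENNReal.log (tailRootSup q x) :=
    ENNReal.log_monotone.comp_antitone (tailRootSup_antitone hanti)
  refine EReal.coe_mul_add_coe_mul_le_of_forall_exists ⟨hα0, hα1⟩ (hlog_anti hxy)
    (ne_top_of_le_ne_top EReal.zero_ne_top
      (ENNReal.log_le_zero_iff.2 (tailRootSup_le_one hq1 y))) fun β hαβ hβ => ?_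
  obtain ⟨n, m, hn, hm, hw⟩ := exists_nat_div_add_mem_Ioo hα0.le hαβ hβ
  refine ⟨n / (n + m), hw, ?_⟩
  have hnm : (n : ℝ) + m ≠ 0 := by positivity
  have hw' : 1 - (n : ℝ) / (n + m) = m / (n + m) := by field_simp; ring
  have hz : α * x + (1 - α) * y ≤ (n * x + m * y) / (n + m) := by
    have : (n * x + m * y) / (n + m) = n / (n + m) * x + m / (n + m) * y := by field_simp
    rw [this, ← hw']
    nlinarith [hw.1]
  rw [hw', ← ENNReal.log_rpow, ← ENNReal.log_rpow, ← ENNReal.log_mul_add]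
  exact (ENNReal.log_monotone
    (tailRootSup_rpow_mul_tailRootSup_rpow_le hq hn hm x y)).trans (hlog_anti hz)

end SupermultiplicativeTail

open SupermultiplicativeTail

theorem le_empMean_iff {Ω : Type*} {X : ℕ → Ω → ℝ} {n : ℕ} (hn : 1 ≤ n) (x : ℝ) (ω : Ω) :
    x ≤ empMean X n ω ↔ n * x ≤ ∑ i ∈ Finset.range n, X i ω := by
  rw [empMean, le_div_iff₀ (by positivity), mul_comm]

theorem entropy_eq_log_tailRootSup {Ω : Type*} [MeasurableSpace Ω] (μ : Measure Ω)
    (X : ℕ → Ω → ℝ) (x : ℝ) :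
    entropy μ X x = ENNReal.log
      (tailRootSup (fun n c => μ {ω | c ≤ ∑ i ∈ Finset.range n, X i ω}) x) := by
  simp only [entropy, tailRootSup, tailRoot, ← ENNReal.logOrderIso_apply, OrderIso.map_iSup]
  refine iSup_congr fun n => iSup_congr fun hn => ?_
  simp only [ENNReal.logOrderIso_apply, ENNReal.log_rpow, le_empMean_iff hn]

theorem entropy_concave_general {Ω : Type*} [MeasurableSpace Ω] (μ : Measure Ω) [IsProbabilityMeasure μ]
    (X : ℕ → Ω → ℝ)
    (hindep : iIndepFun X μ)
    (hident : ∀ i, IdentDistrib (X i) (X 0) μ μ)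
    (x y α : ℝ) (hα : α ∈ Set.Icc (0 : ℝ) 1) :
    ((α : ℝ) : EReal) * entropy μ X x + ((1 - α : ℝ) : EReal) * entropy μ X y ≤
      entropy μ X (α * x + (1 - α) * y) := by
  have hiid : ∀ i j, IdentDistrib (X i) (X j) μ μ := fun i j => (hident i).trans (hident j).symm
  have hanti : ∀ n, Antitone fun c => μ {ω | c ≤ ∑ i ∈ Finset.range n, X i ω} :=
    fun n c c' hc => measure_mono fun ω (h : c' ≤ _) => hc.trans h
  simp only [entropy_eq_log_tailRootSup]
  exact log_tailRootSup_concave hanti (hindep.measure_le_sum_range_mul_le hiid)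
    (fun n c => prob_le_one) x y α hα

theorem entropy_concave {Ω : Type*} [MeasurableSpace Ω] (μ : Measure Ω) [IsProbabilityMeasure μ]
    (X : ℕ → Ω → ℝ) (hmeas : ∀ i, Measurable (X i))
    (hindep : iIndepFun X μ)
    (hident : ∀ i, IdentDistrib (X i) (X 0) μ μ)
    (x y α : ℝ) (hα : α ∈ Set.Icc (0 : ℝ) 1) :
    ((α : ℝ) : EReal) * entropy μ X x + ((1 - α : ℝ) : EReal) * entropy μ X y ≤
      entropy μ X (α * x + (1 - α) * y) :=
  entropy_concave_general μ X hindep hident x y α hα
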